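/- Let n ≥ 2, k > 0, m ≥ 2 even, and ξ ∈ ℝ^n with ξ ≠ 0 and |ξ| ≤ (m+1)k. Let e_1 = ξ/|ξ|, e_2 a unit vector orthogonal to e_1, and Ξ = √(m²k² − (|ξ|−k)²). Define ζ_0 = k e_1, and for j = 1,...,m, ζ_j = (1/m)((|ξ|−k) e_1 + Ξ e_2) if j is odd, ζ_j = (1/m)((|ξ|−k) e_1 − Ξ e_2) if j is even. Then ζ_j · ζ_j = k² for all j = 0,1,...,m and ζ_0 + ζ_1 + ... + ζ_m = ξ. -/

import Mathlib

open scoped RealInnerProductSpace BigOperators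

/-! The odd- and even-indexed `ζⱼ` differ only in the sign of their `e₂`-component, so the `m / 2`
pairs sum to `(‖ξ‖ - k) • e₁`, and adding `ζ₀ = k • e₁` gives `ξ`. Each `ζⱼ` has squared length
`k²` by Pythagoras for the orthonormal pair `e₁, e₂`, because `(‖ξ‖ - k)² + Ξ² = m²k²`; the radicand
of `Ξ` is nonnegative since `‖ξ‖ ≤ (m + 1)k` forces `k ≥ 0`, whence `|‖ξ‖ - k| ≤ mk`. -/

open Finset in
theorem sum_range_two_mul_add_one_ite_odd {M : Type*} [AddCommMonoid M] (c a b : M) (t : ℕ) :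
    ∑ i ∈ range (2 * t + 1), (if i = 0 then c else if Odd i then a else b) = c + t • (a + b) := by
  induction t with
  | zero => simp
  | succ t ih =>
    rw [show 2 * (t + 1) + 1 = 2 * t + 1 + 1 + 1 by ring, sum_range_succ, sum_range_succ, ih,
      if_neg (by omega), if_pos (by simp), if_neg (by omega), if_neg (by simp [Nat.odd_add_one]),
      succ_nsmul]
    abel

theorem sub_sq_le_mul_sq {x k m : ℝ} (hx : 0 ≤ x) (hm : 1 ≤ m) (h : x ≤ (m + 1) * k) :
    (x - k) ^ 2 ≤ (m * k) ^ 2 := by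
  have hk : 0 ≤ k := by nlinarith
  exact sq_le_sq' (by nlinarith) (by linarith)

section Orthonormal

variable {E : Type*} [NormedAddCommGroup E] [InnerProductSpace ℝ E] {u v : E}

theorem real_inner_self_smul_add_smul (hu : ‖u‖ = 1) (hv : ‖v‖ = 1) (huv : ⟪u, v⟫ = 0)
    (a b : ℝ) : ⟪a • u + b • v, a • u + b • v⟫ = a ^ 2 + b ^ 2 := by
  have h_orth : ⟪a • u, b • v⟫ = 0 := by simp [real_inner_smul_left, real_inner_smul_right, huv]
  rw [real_inner_self_eq_norm_mul_norm, norm_add_sq_eq_norm_sq_add_norm_sq_real h_orth]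
  simp only [norm_smul, hu, hv, Real.norm_eq_abs, mul_one, abs_mul_abs_self]
  ring

theorem real_inner_self_inv_smul_smul_add_smul (hu : ‖u‖ = 1) (hv : ‖v‖ = 1) (huv : ⟪u, v⟫ = 0)
    {m k a b : ℝ} (hm : m ≠ 0) (hab : a ^ 2 + b ^ 2 = m ^ 2 * k ^ 2) :
    ⟪m⁻¹ • (a • u + b • v), m⁻¹ • (a • u + b • v)⟫ = k ^ 2 := by
  rw [real_inner_smul_left, real_inner_smul_right, real_inner_self_smul_add_smul hu hv huv, hab]
  field_simp

end Orthonormal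

theorem wave_vectors_even_m_general (n m : ℕ) (hm : 2 ≤ m) (hmeven : Even m)
    (k : ℝ) (ξ e₂ : EuclideanSpace ℝ (Fin n))
    (hξ : ξ ≠ 0) (hle : ‖ξ‖ ≤ ((m : ℝ) + 1) * k)
    (he₂ : ‖e₂‖ = 1) (horth : (inner ℝ (‖ξ‖⁻¹ • ξ) e₂ : ℝ) = 0) :
    let e₁ : EuclideanSpace ℝ (Fin n) := ‖ξ‖⁻¹ • ξ
    let Ξ : ℝ := Real.sqrt ((m : ℝ) ^ 2 * k ^ 2 - (‖ξ‖ - k) ^ 2)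
    let ζ : Fin (m + 1) → EuclideanSpace ℝ (Fin n) := fun j =>
      if (j : ℕ) = 0 then k • e₁
      else if Odd (j : ℕ) then ((m : ℝ))⁻¹ • ((‖ξ‖ - k) • e₁ + Ξ • e₂)
      else ((m : ℝ))⁻¹ • ((‖ξ‖ - k) • e₁ - Ξ • e₂)
    (∀ j : Fin (m + 1), (inner ℝ (ζ j) (ζ j) : ℝ) = k ^ 2) ∧ (∑ j, ζ j = ξ) := by
  intro e₁ Ξ ζ
  have he₁ : ‖e₁‖ = 1 := norm_smul_inv_norm hξ
  have hm₀ : (m : ℝ) ≠ 0 := by positivity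
  have hΞ : (‖ξ‖ - k) ^ 2 + Ξ ^ 2 = (m : ℝ) ^ 2 * k ^ 2 := by
    have hm₁ : (1 : ℝ) ≤ m := by exact_mod_cast (by omega : 1 ≤ m)
    have := sub_sq_le_mul_sq (norm_nonneg ξ) hm₁ hle
    rw [Real.sq_sqrt (sub_nonneg.2 (by rwa [← mul_pow]))]
    ring
  refine ⟨fun j => ?_, ?_⟩
  · simp only [ζ]
    split_ifs
    · rw [real_inner_smul_left, real_inner_smul_right, real_inner_self_eq_norm_sq, he₁]
      ring
    · exact real_inner_self_inv_smul_smul_add_smul he₁ he₂ horth hm₀ hΞ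
    · rw [sub_eq_add_neg, ← neg_smul]
      exact real_inner_self_inv_smul_smul_add_smul he₁ he₂ horth hm₀ (by rwa [neg_sq])
  · obtain ⟨t, rfl⟩ := even_iff_two_dvd.mp hmeven
    rw [Fin.sum_univ_eq_sum_range (fun i => if i = 0 then k • e₁ else if Odd i then _ else _),
      sum_range_two_mul_add_one_ite_odd, ← Nat.cast_smul_eq_nsmul ℝ]
    conv_rhs => rw [← smul_inv_smul₀ (norm_ne_zero_iff.mpr hξ) ξ]
    have ht : (t : ℝ) ≠ 0 := by norm_cast; omega
    match_scalars <;> field_simp <;> ring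

theorem wave_vectors_even_m (n m : ℕ) (hn : 2 ≤ n) (hm : 2 ≤ m) (hmeven : Even m)
    (k : ℝ) (hk : 0 < k) (ξ e₂ : EuclideanSpace ℝ (Fin n))
    (hξ : ξ ≠ 0) (hle : ‖ξ‖ ≤ ((m : ℝ) + 1) * k)
    (he₂ : ‖e₂‖ = 1) (horth : (inner ℝ (‖ξ‖⁻¹ • ξ) e₂ : ℝ) = 0) :
    let e₁ : EuclideanSpace ℝ (Fin n) := ‖ξ‖⁻¹ • ξ
    let Ξ : ℝ := Real.sqrt ((m : ℝ) ^ 2 * k ^ 2 - (‖ξ‖ - k) ^ 2)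
    let ζ : Fin (m + 1) → EuclideanSpace ℝ (Fin n) := fun j =>
      if (j : ℕ) = 0 then k • e₁
      else if Odd (j : ℕ) then ((m : ℝ))⁻¹ • ((‖ξ‖ - k) • e₁ + Ξ • e₂)
      else ((m : ℝ))⁻¹ • ((‖ξ‖ - k) • e₁ - Ξ • e₂)
    (∀ j : Fin (m + 1), (inner ℝ (ζ j) (ζ j) : ℝ) = k ^ 2) ∧ (∑ j, ζ j = ξ) :=
  wave_vectors_even_m_general n m hm hmeven k ξ e₂ hξ hle he₂ horth
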